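/- For all μ > 0, κ > 0, k > 0 and k̂ > 0, there exist X, H ∈ Sym(3) such that Q(X, H) < 0, where Q(X, H) = 2μ·exp(k‖dev₃ X‖² − tr X)·(2k·⟨dev₃ X, H⟩² − tr(H)·⟨dev₃ X, H⟩ + ‖dev₃ H‖²) + κ·exp(k̂(tr X)² − tr X)·(2k̂(tr X)² − tr X + 1)·(tr H)². -/
import Mathlib


open Matrix Real

/-- The deviatoric (trace-free) part of a 3×3 matrix: `dev₃ X = X − (tr X/3)·1`. -/
noncomputable def dev3 (X : Matrix (Fin 3) (Fin 3) ℝ) : Matrix (Fin 3) (Fin 3) ℝ :=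
  X - (X.trace / 3) • (1 : Matrix (Fin 3) (Fin 3) ℝ)

/-- The Frobenius inner product `⟨A, B⟩ = tr(A Bᵀ)`. -/
noncomputable def minner (A B : Matrix (Fin 3) (Fin 3) ℝ) : ℝ := (A * Bᵀ).trace

/-- The second-order form `Q(X,H) = ⟨D_X σ_eH(X).H, H⟩` of the exponentiated Hencky
Cauchy stress. -/
noncomputable def Qform (μ κ k khat : ℝ) (X H : Matrix (Fin 3) (Fin 3) ℝ) : ℝ :=
  2 * μ * Real.exp (k * minner (dev3 X) (dev3 X) - X.trace) *
      (2 * k * minner (dev3 X) H ^ 2 - H.trace * minner (dev3 X) H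
        + minner (dev3 H) (dev3 H))
    + κ * Real.exp (khat * X.trace ^ 2 - X.trace) *
        (2 * khat * X.trace ^ 2 - X.trace + 1) * H.trace ^ 2

/-- Value of `Qform` on the diagonal test pair `X = diag(s,−s,0)`, `H = diag(1+e,1−e,1)`. -/
lemma Qform_diag (μ κ k khat s e : ℝ) :
    Qform μ κ k khat !![s,0,0;0,-s,0;0,0,0] !![1+e,0,0;0,1-e,0;0,0,1]
      = 2 * μ * Real.exp (2 * k * s ^ 2) * (8 * k * s ^ 2 * e ^ 2 - 6 * s * e + 2 * e ^ 2)
        + 9 * κ := by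
  have hX : (!![s,0,0;0,-s,0;0,0,0] : Matrix (Fin 3) (Fin 3) ℝ)ᵀ
      = !![s,0,0;0,-s,0;0,0,0] := by
    ext i j; fin_cases i <;> fin_cases j <;> rfl
  have hH : (!![1+e,0,0;0,1-e,0;0,0,1] : Matrix (Fin 3) (Fin 3) ℝ)ᵀ
      = !![1+e,0,0;0,1-e,0;0,0,1] := by
    ext i j; fin_cases i <;> fin_cases j <;> rfl
  have htX : (!![s,0,0;0,-s,0;0,0,0] : Matrix (Fin 3) (Fin 3) ℝ).trace = 0 := by
    simp [Matrix.trace_fin_three, Matrix.vecHead, Matrix.vecTail]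
  have htH : (!![1+e,0,0;0,1-e,0;0,0,1] : Matrix (Fin 3) (Fin 3) ℝ).trace = 3 := by
    simp [Matrix.trace_fin_three]; ring
  have hdX : dev3 !![s,0,0;0,-s,0;0,0,0] = !![s,0,0;0,-s,0;0,0,0] := by
    simp [dev3, htX]
  have h1 : minner (dev3 !![s,0,0;0,-s,0;0,0,0]) (dev3 !![s,0,0;0,-s,0;0,0,0])
      = 2 * s ^ 2 := by
    rw [hdX]
    simp [minner, hX, Matrix.trace_fin_three, Matrix.mul_apply, Fin.sum_univ_three,
      Matrix.vecHead, Matrix.vecTail]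
    ring
  have h2 : minner (dev3 !![s,0,0;0,-s,0;0,0,0]) !![1+e,0,0;0,1-e,0;0,0,1]
      = 2 * s * e := by
    rw [hdX]
    simp [minner, hH, Matrix.trace_fin_three, Matrix.mul_apply, Fin.sum_univ_three,
      Matrix.vecHead, Matrix.vecTail]
    ring
  have h3 : minner (dev3 !![1+e,0,0;0,1-e,0;0,0,1]) (dev3 !![1+e,0,0;0,1-e,0;0,0,1])
      = 2 * e ^ 2 := by
    have hdH : dev3 !![1+e,0,0;0,1-e,0;0,0,1] = !![e,0,0;0,-e,0;0,0,0] := by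
      rw [dev3, htH, Matrix.one_fin_three]
      ext i j; fin_cases i <;> fin_cases j <;>
        simp [Matrix.vecHead, Matrix.vecTail] <;> ring
    rw [hdH]
    have hE : (!![e,0,0;0,-e,0;0,0,0] : Matrix (Fin 3) (Fin 3) ℝ)ᵀ
        = !![e,0,0;0,-e,0;0,0,0] := by
      ext i j; fin_cases i <;> fin_cases j <;> rfl
    simp [minner, hE, Matrix.trace_fin_three, Matrix.mul_apply, Fin.sum_univ_three,
      Matrix.vecHead, Matrix.vecTail]
    ring
  rw [Qform, h1, h2, h3, htX, htH]
  simp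
  ring_nf

/-- The strict true-stress–true-strain monotonicity condition (TSTS-M⁺) is not
satisfied everywhere by the exponentiated Hencky energy: for all `μ, κ, k, k̂ > 0`
there are symmetric `X, H` with `Q(X, H) < 0`. -/
theorem Qform_not_nonneg (μ κ k khat : ℝ) (hμ : 0 < μ) (hκ : 0 < κ) (hk : 0 < k)
    (hkhat : 0 < khat) :
    ∃ X H : Matrix (Fin 3) (Fin 3) ℝ, X.IsSymm ∧ H.IsSymm ∧ Qform μ κ k khat X H < 0 := by
  set M : ℝ := max (1 / k) ((Real.log (9 * κ * k / μ) + 1) / (2 * k)) with hM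
  have hMpos : 0 < M := lt_of_lt_of_le (by positivity) (le_max_left _ _)
  set s : ℝ := Real.sqrt M with hs
  have hspos : 0 < s := Real.sqrt_pos.mpr hMpos
  have hs2 : s ^ 2 = M := Real.sq_sqrt hMpos.le
  have hks2 : 1 ≤ k * s ^ 2 := by
    rw [hs2]
    have : 1 / k ≤ M := le_max_left _ _
    calc (1:ℝ) = k * (1 / k) := by field_simp
    _ ≤ k * M := by nlinarith
  have hlog : Real.log (9 * κ * k / μ) + 1 ≤ 2 * k * s ^ 2 := by
    rw [hs2]
    have h1 : (Real.log (9 * κ * k / μ) + 1) / (2 * k) ≤ M := le_max_right _ _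
    have h2 := (div_le_iff₀ (by positivity : (0:ℝ) < 2 * k)).mp h1
    linarith
  set e : ℝ := 1 / (2 * k * s) with he
  refine ⟨!![s,0,0;0,-s,0;0,0,0], !![1+e,0,0;0,1-e,0;0,0,1], ?_, ?_, ?_⟩
  · ext i j; fin_cases i <;> fin_cases j <;> rfl
  · ext i j; fin_cases i <;> fin_cases j <;> rfl
  · rw [Qform_diag]
    have hEpos : 0 < Real.exp (2 * k * s ^ 2) := Real.exp_pos _
    -- bracket value
    have hbr : 8 * k * s ^ 2 * e ^ 2 - 6 * s * e + 2 * e ^ 2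
        = -1 / k + 1 / (2 * k ^ 2 * s ^ 2) := by
      rw [he]; field_simp; ring
    have hbr_le : 8 * k * s ^ 2 * e ^ 2 - 6 * s * e + 2 * e ^ 2 ≤ -1 / (2 * k) := by
      rw [hbr]
      have h1 : 1 / (2 * k ^ 2 * s ^ 2) ≤ 1 / (2 * k) := by
        apply one_div_le_one_div_of_le (by positivity)
        nlinarith
      have : -1 / k + 1 / (2 * k) = -1 / (2 * k) := by field_simp; ring
      linarith
    have hE9 : 9 * κ * k / μ < Real.exp (2 * k * s ^ 2) := by
      calc 9 * κ * k / μ ≤ Real.exp (Real.log (9 * κ * k / μ)) := by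
            rw [Real.exp_log (by positivity)]
      _ < Real.exp (2 * k * s ^ 2) := Real.exp_lt_exp.mpr (by linarith)
    have hstep : 2 * μ * Real.exp (2 * k * s ^ 2) *
        (8 * k * s ^ 2 * e ^ 2 - 6 * s * e + 2 * e ^ 2)
        ≤ 2 * μ * Real.exp (2 * k * s ^ 2) * (-1 / (2 * k)) := by
      apply mul_le_mul_of_nonneg_left hbr_le (by positivity)
    have hfin : 2 * μ * Real.exp (2 * k * s ^ 2) * (-1 / (2 * k)) + 9 * κ < 0 := by
      have h2 : 2 * μ * Real.exp (2 * k * s ^ 2) * (-1 / (2 * k))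
          = -(μ * Real.exp (2 * k * s ^ 2) / k) := by field_simp
      rw [h2]
      have : 9 * κ < μ * Real.exp (2 * k * s ^ 2) / k := by
        rw [lt_div_iff₀ hk]
        rw [div_lt_iff₀ hμ] at hE9
        nlinarith
      linarith
    linarith
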